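/- Let M ⊆ ℝⁿ be a smooth embedded submanifold, A a linear map with ‖A y₁ - A y₂‖ ≥ μ‖y₁ - y₂‖ and ‖A y₁ - A y₂‖ ≤ L‖y₁ - y₂‖ for all y₁, y₂ ∈ M. Then for every point p ∈ M and every tangent vector h ∈ T_p M (realized as γ'(0) for a smooth curve γ in M with γ(0) = p), one has μ‖h‖ ≤ ‖A h‖ ≤ L‖h‖. -/
import Mathlib


theorem stmt_16 (d n : ℕ) (M : Set (EuclideanSpace ℝ (Fin n)))
    (A : EuclideanSpace ℝ (Fin n) →ₗ[ℝ] EuclideanSpace ℝ (Fin d))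
    (μ L : ℝ) (hμ : 0 < μ) (hL : 0 < L)
    (hlow : ∀ y₁ ∈ M, ∀ y₂ ∈ M, μ * ‖y₁ - y₂‖ ≤ ‖A y₁ - A y₂‖)
    (hup : ∀ y₁ ∈ M, ∀ y₂ ∈ M, ‖A y₁ - A y₂‖ ≤ L * ‖y₁ - y₂‖)
    (p : EuclideanSpace ℝ (Fin n)) (hp : p ∈ M)
    (γ : ℝ → EuclideanSpace ℝ (Fin n))
    (hγM : ∀ t : ℝ, γ t ∈ M) (hγ0 : γ 0 = p)
    (hγsmooth : ContDiff ℝ (⊤ : ℕ∞) γ)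
    (h : EuclideanSpace ℝ (Fin n)) (hh : HasDerivAt γ h 0) :
    μ * ‖h‖ ≤ ‖A h‖ ∧ ‖A h‖ ≤ L * ‖h‖ := by
  have hA : Continuous A := A.continuous_of_finiteDimensional
  have hslope : Filter.Tendsto (slope γ 0) (nhdsWithin 0 {(0:ℝ)}ᶜ) (nhds h) :=
    hasDerivAt_iff_tendsto_slope.mp hh
  have h1 : Filter.Tendsto (fun t => μ * ‖slope γ 0 t‖) (nhdsWithin 0 {(0:ℝ)}ᶜ)
      (nhds (μ * ‖h‖)) := (hslope.norm.const_mul μ)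
  have h2 : Filter.Tendsto (fun t => ‖A (slope γ 0 t)‖) (nhdsWithin 0 {(0:ℝ)}ᶜ)
      (nhds ‖A h‖) := ((hA.tendsto h).comp hslope).norm
  have h3 : Filter.Tendsto (fun t => L * ‖slope γ 0 t‖) (nhdsWithin 0 {(0:ℝ)}ᶜ)
      (nhds (L * ‖h‖)) := (hslope.norm.const_mul L)
  have key : ∀ t : ℝ, t ≠ 0 →
      μ * ‖slope γ 0 t‖ ≤ ‖A (slope γ 0 t)‖ ∧ ‖A (slope γ 0 t)‖ ≤ L * ‖slope γ 0 t‖ := by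
    intro t ht
    have hsl : slope γ 0 t = (t - 0)⁻¹ • (γ t - γ 0) := rfl
    have hAsl : A (slope γ 0 t) = (t - 0)⁻¹ • (A (γ t) - A (γ 0)) := by
      rw [hsl, map_smul, map_sub]
    constructor
    · rw [hsl, map_smul, map_sub, norm_smul, norm_smul]
      rw [← mul_assoc, mul_comm μ ‖(t-0)⁻¹‖, mul_assoc]
      exact mul_le_mul_of_nonneg_left (hlow _ (hγM t) _ (hγM 0)) (norm_nonneg _)
    · rw [hsl, map_smul, map_sub, norm_smul, norm_smul]
      rw [← mul_assoc, mul_comm L ‖(t-0)⁻¹‖, mul_assoc]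
      exact mul_le_mul_of_nonneg_left (hup _ (hγM t) _ (hγM 0)) (norm_nonneg _)
  constructor
  · refine le_of_tendsto_of_tendsto h1 h2 ?_
    filter_upwards [self_mem_nhdsWithin] with t ht
    exact (key t ht).1
  · refine le_of_tendsto_of_tendsto h2 h3 ?_
    filter_upwards [self_mem_nhdsWithin] with t ht
    exact (key t ht).2
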